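/- Symmetry and positive definiteness of the Brownian-bridge regularized Green's function: for v > 0 and c > 0, the kernel G(t,s) = sinh(c((t∧s)-a)) sinh(c(b-(t∨s)))/sinh(c(b-a)) on [a,b]² is symmetric and positive semidefinite, i.e., ∑_{n,m} z_n z_m G(t_n, t_m) ≥ 0 for all finite families of points t_n ∈ [a,b] and reals z_n. -/

import Mathlib

/-!
For `t ≤ s` the product-to-sum formula `sinh x sinh y = (cosh (x + y) - cosh (x - y)) / 2` gives
`sinh (c (t - a)) sinh (c (b - s)) ≤ sinh (c (s - a)) sinh (c (b - t))`, so the numerator of the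
kernel is `min (p t q s) (p s q t)` with `p u = sinh (c (u - a))`, `q u = sinh (c (b - u))`.
On `[a, b]` both are nonnegative and this equals `q t q s min (p t / q t) (p s / q s)`: a diagonal
congruence of the Brownian covariance `min`, which is the Gram matrix of the indicators of `[0, x]`.
-/

open Real Matrix MeasureTheory

lemma Matrix.PosSemidef.sum_sum_mul_nonneg {ι : Type*} [Fintype ι] {M : Matrix ι ι ℝ}
    (hM : M.PosSemidef) (z : ι → ℝ) : 0 ≤ ∑ i, ∑ j, z i * z j * M i j := by
  refine (hM.dotProduct_mulVec_nonneg z).trans_eq ?_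
  simp only [dotProduct, mulVec, Finset.mul_sum, star_trivial]
  exact Finset.sum_congr rfl fun i _ ↦ Finset.sum_congr rfl fun j _ ↦ by ring

lemma posSemidef_min {ι : Type*} [Fintype ι] {x : ι → ℝ} (hx : ∀ i, 0 ≤ x i) :
    (Matrix.of fun i j ↦ min (x i) (x j)).PosSemidef := by
  convert posSemidef_matrix_measure_inter (μ := volume) (s := fun i ↦ Set.Icc 0 (x i))
    (fun _ ↦ measurableSet_Icc) (fun _ ↦ isCompact_Icc.measure_ne_top) using 2 with i j
  simp [Set.Icc_inter_Icc, hx]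

-- With the junk value `p / 0 = 0` this holds also when `q₁` or `q₂` vanishes.
lemma min_mul_mul_eq_mul_min_div {p₁ p₂ q₁ q₂ : ℝ} (hp₁ : 0 ≤ p₁) (hp₂ : 0 ≤ p₂)
    (hq₁ : 0 ≤ q₁) (hq₂ : 0 ≤ q₂) :
    min (p₁ * q₂) (p₂ * q₁) = q₁ * q₂ * min (p₁ / q₁) (p₂ / q₂) := by
  rcases hq₁.eq_or_lt with rfl | hq₁
  · simp [mul_nonneg hp₁ hq₂]
  rcases hq₂.eq_or_lt with rfl | hq₂
  · simp [mul_nonneg hp₂ hq₁.le]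
  rw [mul_min_of_nonneg _ _ (by positivity)]
  congr 1 <;> field_simp

lemma posSemidef_min_mul_mul {ι : Type*} [Fintype ι] {p q : ι → ℝ} (hp : ∀ i, 0 ≤ p i)
    (hq : ∀ i, 0 ≤ q i) :
    (Matrix.of fun i j ↦ min (p i * q j) (p j * q i)).PosSemidef := by
  classical
  convert (posSemidef_min fun i ↦ div_nonneg (hp i) (hq i)).conjTranspose_mul_mul_same
    (diagonal q) using 1
  ext i j
  simp [min_mul_mul_eq_mul_min_div (hp i) (hp j) (hq i) (hq j)]
  ring

lemma sinh_mul_sinh_le_sinh_mul_sinh {x y x' y' : ℝ} (hsub : x - y = x' - y')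
    (hadd : |x + y| ≤ x' + y') : sinh x * sinh y ≤ sinh x' * sinh y' := by
  have product_to_sum (u v : ℝ) : sinh u * sinh v = (cosh (u + v) - cosh (u - v)) / 2 := by
    rw [cosh_add, cosh_sub]; ring
  rw [product_to_sum, product_to_sum, hsub]
  gcongr
  rwa [cosh_le_cosh, abs_of_nonneg ((abs_nonneg _).trans hadd)]

lemma sinh_mul_sinh_min_max (a b c t s : ℝ) (hab : a ≤ b) (hc : 0 ≤ c) :
    sinh (c * (min t s - a)) * sinh (c * (b - max t s)) =
      min (sinh (c * (t - a)) * sinh (c * (b - s))) (sinh (c * (s - a)) * sinh (c * (b - t))) := by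
  wlog hts : t ≤ s generalizing t s
  · rw [min_comm t, max_comm t, min_comm (sinh _ * _), this s t (le_of_not_ge hts)]
  rw [min_eq_left hts, max_eq_right hts, min_eq_left]
  refine sinh_mul_sinh_le_sinh_mul_sinh (by ring) (abs_le.mpr ⟨?_, ?_⟩) <;> nlinarith

/-- Symmetry and positive semidefiniteness of the Brownian-bridge
regularized Green's kernel
`G(t,s) = sinh(c((t∧s)-a)) sinh(c(b-(t∨s)))/sinh(c(b-a))`. -/
theorem regularized_bridge_kernel_symm_posSemidef
    (a b c : ℝ) (hab : a < b) (hc : 0 < c)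
    (G : ℝ → ℝ → ℝ)
    (hG : ∀ t s, G t s = Real.sinh (c * (min t s - a)) *
        Real.sinh (c * (b - max t s)) / Real.sinh (c * (b - a))) :
    (∀ t s, G t s = G s t) ∧
    (∀ (N : ℕ) (t : Fin N → ℝ), (∀ n, t n ∈ Set.Icc a b) → ∀ z : Fin N → ℝ,
      0 ≤ ∑ n : Fin N, ∑ m : Fin N, z n * z m * G (t n) (t m)) := by
  refine ⟨fun t s ↦ by rw [hG, hG, min_comm, max_comm], fun N t ht z ↦ ?_⟩
  have hS : 0 ≤ (sinh (c * (b - a)))⁻¹ :=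
    inv_nonneg.mpr (sinh_nonneg_iff.mpr (mul_nonneg hc.le (sub_nonneg.mpr hab.le)))
  have hK := (posSemidef_min_mul_mul (p := fun n ↦ sinh (c * (t n - a)))
    (q := fun n ↦ sinh (c * (b - t n)))
    (fun n ↦ sinh_nonneg_iff.mpr (mul_nonneg hc.le (sub_nonneg.mpr (ht n).1)))
    (fun n ↦ sinh_nonneg_iff.mpr (mul_nonneg hc.le (sub_nonneg.mpr (ht n).2)))).smul hS
  refine (hK.sum_sum_mul_nonneg z).trans_eq <|
    Finset.sum_congr rfl fun n _ ↦ Finset.sum_congr rfl fun m _ ↦ ?_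
  rw [hG, sinh_mul_sinh_min_max a b c _ _ hab.le hc.le]
  simp only [Matrix.smul_apply, of_apply, smul_eq_mul]
  ring
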